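/- For every unit vector ψ ∈ ℂ^d with associated pure-state density matrix ρ_ψ = |ψ⟩⟨ψ|, one has M_Re(ρ_ψ) = 1 − (1/√2)·√(1 + (1 − 2·M_g(ρ_ψ))²), where M_g is the geometric imaginarity. -/

import Mathlib

open Matrix Complex ComplexOrder Classical

/-- The positive semidefinite square root of a matrix (junk value `0` if not PSD). -/
noncomputable def psqrt {n : Type*} [Fintype n] [DecidableEq n] (A : Matrix n n ℂ) :
    Matrix n n ℂ :=
  if h : A.PosSemidef then (h.1.eigenvectorUnitary : Matrix n n ℂ) *
    diagonal ((↑) ∘ (√·) ∘ h.1.eigenvalues) * (star h.1.eigenvectorUnitary : Matrix n n ℂ)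
  else 0

/-- Entrywise complex conjugate of a matrix. -/
def mconj {m n : Type*} (A : Matrix m n ℂ) : Matrix m n ℂ := A.map (starRingEnd ℂ)

/-- Fidelity `F(ρ,σ) = Tr √(√ρ σ √ρ)`. -/
noncomputable def fidelity {n : Type*} [Fintype n] [DecidableEq n] (ρ σ : Matrix n n ℂ) : ℝ :=
  ((psqrt (psqrt ρ * σ * psqrt ρ)).trace).re

/-- The real part state `Re(ρ) = (ρ + ρ*)/2`. -/
noncomputable def reState {n : Type*} (ρ : Matrix n n ℂ) : Matrix n n ℂ :=
  ((1 : ℂ)/2) • (ρ + mconj ρ)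

/-- The imaginarity measure `M_Re(ρ) = 1 - F(ρ, Re(ρ))`. -/
noncomputable def MRe {n : Type*} [Fintype n] [DecidableEq n] (ρ : Matrix n n ℂ) : ℝ :=
  1 - fidelity ρ (reState ρ)

/-- A density matrix: positive semidefinite with trace 1. -/
def IsDensityMatrix {n : Type*} [Fintype n] (ρ : Matrix n n ℂ) : Prop :=
  ρ.PosSemidef ∧ ρ.trace = 1

/-- The geometric imaginarity `M_g(ρ) = (1/2)(1 - F(ρ, ρ*))`. -/
noncomputable def Mg {n : Type*} [Fintype n] [DecidableEq n] (ρ : Matrix n n ℂ) : ℝ :=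
  (1/2) * (1 - fidelity ρ (mconj ρ))

/-!
For a pure state `ρ = |ψ⟩⟨ψ|` one has `ρ σ ρ = ⟨ψ|σ|ψ⟩ ρ` and `ρ² = ρ`, so `ρ` is its own square
root and `F(ρ, σ) = √⟨ψ|σ|ψ⟩`. With `t = |ψᵀψ|` we get `⟨ψ|ρ*|ψ⟩ = t²`, hence `M_g(ρ) = (1 - t)/2`,
and `⟨ψ|Re ρ|ψ⟩ = (1 + t²)/2`, hence `M_Re(ρ) = 1 - √((1 + t²)/2)`.
-/

namespace Matrix

variable {R n : Type*} [CommSemiring R] [Fintype n]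

theorem dotProduct_vecMulVec_mulVec (x u v y : n → R) :
    x ⬝ᵥ vecMulVec u v *ᵥ y = (x ⬝ᵥ u) * (v ⬝ᵥ y) := by
  rw [dotProduct_mulVec, vecMul_vecMulVec, smul_dotProduct, smul_eq_mul]

theorem vecMulVec_mul_mul_vecMulVec (u v : n → R) (σ : Matrix n n R) :
    vecMulVec u v * σ * vecMulVec u v = (v ⬝ᵥ σ *ᵥ u) • vecMulVec u v := by
  rw [vecMulVec_mul, vecMulVec_mul_vecMulVec, ← dotProduct_mulVec]
  ext i j
  simp only [vecMulVec_apply, Pi.smul_apply, smul_apply, smul_eq_mul]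
  ring

theorem vecMulVec_mul_self_of_dotProduct_eq_one {u v : n → R} (h : v ⬝ᵥ u = 1) :
    vecMulVec u v * vecMulVec u v = vecMulVec u v := by
  rw [vecMulVec_mul_vecMulVec, h, one_smul]

end Matrix

section PureState

variable {n : Type*}

theorem mconj_vecMulVec_self_star (ψ : n → ℂ) :
    mconj (vecMulVec ψ (star ψ)) = vecMulVec (star ψ) ψ := by
  ext i j
  simp [mconj, vecMulVec_apply, mul_comm]

variable [Fintype n]

theorem dotProduct_mconj_vecMulVec_self_star_mulVec (ψ : n → ℂ) :
    star ψ ⬝ᵥ mconj (vecMulVec ψ (star ψ)) *ᵥ ψ = ((‖ψ ⬝ᵥ ψ‖ ^ 2 : ℝ) : ℂ) := by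
  rw [mconj_vecMulVec_self_star, dotProduct_vecMulVec_mulVec, star_dotProduct_star, ofReal_pow]
  exact conj_mul' _

variable [DecidableEq n]

open scoped MatrixOrder in
theorem psqrt_mul_self {B : Matrix n n ℂ} (hB : B.PosSemidef) : psqrt (B * B) = B := by
  have hA : (B * B).PosSemidef := by
    simpa only [hB.1.eq] using posSemidef_conjTranspose_mul_self B
  have h_cfc : psqrt (B * B) = cfc Real.sqrt (B * B) := by
    rw [psqrt, dif_pos hA, hA.1.cfc_eq]
    simp [IsHermitian.cfc]
  rw [h_cfc, ← cfcₙ_eq_cfc (hf0 := Real.sqrt_zero), ← CFC.sqrt_eq_real_sqrt _ hA.nonneg]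
  exact CFC.sqrt_unique rfl hB.nonneg

variable {ψ : n → ℂ}

theorem fidelity_vecMulVec_self_star (hψ : star ψ ⬝ᵥ ψ = 1) {σ : Matrix n n ℂ} {c : ℝ}
    (hc : 0 ≤ c) (hσ : star ψ ⬝ᵥ σ *ᵥ ψ = c) :
    fidelity (vecMulVec ψ (star ψ)) σ = √c := by
  set ρ := vecMulVec ψ (star ψ)
  have hρ : ρ.PosSemidef := posSemidef_vecMulVec_self_star ψ
  have hρρ : ρ * ρ = ρ := vecMulVec_mul_self_of_dotProduct_eq_one hψ
  have h_sandwich : ρ * σ * ρ = ((√c : ℝ) : ℂ) • ρ * (((√c : ℝ) : ℂ) • ρ) := by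
    rw [vecMulVec_mul_mul_vecMulVec, hσ, smul_mul_smul_comm, hρρ, ← ofReal_mul,
      Real.mul_self_sqrt hc]
  have h_trace : ρ.trace = 1 := by rw [trace_vecMulVec, dotProduct_comm, hψ]
  have h_psd : (((√c : ℝ) : ℂ) • ρ).PosSemidef :=
    hρ.smul (by exact_mod_cast Real.sqrt_nonneg c)
  have h_sqrt : psqrt ρ = ρ := by simpa only [hρρ] using psqrt_mul_self hρ
  rw [fidelity, h_sqrt, h_sandwich, psqrt_mul_self h_psd, trace_smul,
    h_trace, smul_eq_mul, mul_one, ofReal_re]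

theorem Mg_vecMulVec_self_star (hψ : star ψ ⬝ᵥ ψ = 1) :
    Mg (vecMulVec ψ (star ψ)) = (1 - ‖ψ ⬝ᵥ ψ‖) / 2 := by
  rw [Mg, fidelity_vecMulVec_self_star hψ (by positivity)
    (dotProduct_mconj_vecMulVec_self_star_mulVec ψ), Real.sqrt_sq (norm_nonneg _)]
  ring

theorem MRe_vecMulVec_self_star (hψ : star ψ ⬝ᵥ ψ = 1) :
    MRe (vecMulVec ψ (star ψ)) = 1 - √((1 + ‖ψ ⬝ᵥ ψ‖ ^ 2) / 2) := by
  have h_re : star ψ ⬝ᵥ reState (vecMulVec ψ (star ψ)) *ᵥ ψ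
      = (((1 + ‖ψ ⬝ᵥ ψ‖ ^ 2) / 2 : ℝ) : ℂ) := by
    rw [reState, smul_mulVec, add_mulVec, dotProduct_smul, dotProduct_add,
      dotProduct_vecMulVec_mulVec, dotProduct_mconj_vecMulVec_self_star_mulVec, hψ, smul_eq_mul]
    push_cast
    ring
  rw [MRe, fidelity_vecMulVec_self_star hψ (by positivity) h_re]

end PureState

theorem stmt3 (d : ℕ) (ψ : Fin d → ℂ) (hψ : star ψ ⬝ᵥ ψ = 1) :
    MRe (Matrix.vecMulVec ψ (star ψ)) =
      1 - (1 / Real.sqrt 2) *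
        Real.sqrt (1 + (1 - 2 * Mg (Matrix.vecMulVec ψ (star ψ))) ^ 2) := by
  rw [MRe_vecMulVec_self_star hψ, Mg_vecMulVec_self_star hψ, Real.sqrt_div (by positivity)]
  ring_nf
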